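/- arXiv:2503.22849 — 2 statements merged into one kernel-verified Lean document; each statement's English description precedes it below -/
import Mathlib

section
/- The canonical inclusion ι: Gr(k,N) → Gr(l,M) preserves the chordal distance: d_κ(ι(V), ι(U)) = d_κ(V, U) for all V, U ∈ Gr(k,N), whenever k ≤ l, N ≤ M, and l-k ≤ M-N. -/
/-!
Zero padding is a linear isometry `J`, so the projection onto `J V` is `J P_V J*`, and `J* J = 1`
gives `tr (P_{JV} P_{JU}) = tr (P_V P_U)`. The identity block `T` is orthogonal to every `J V`, so
`P_{JV ⊔ T} = P_{JV} + P_T` with vanishing cross terms. Hence both the dimensions and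
`Σ cos² θ_i = tr (P P)` grow by `dim T = l - k`, and their difference, `d_κ²`, is unchanged.
-/

open Module

/-- Orthogonal projection onto a subspace of `ℝ^N`, as a linear endomorphism. -/
noncomputable def projOf {N : ℕ} (V : Submodule ℝ (EuclideanSpace ℝ (Fin N))) :
    EuclideanSpace ℝ (Fin N) →ₗ[ℝ] EuclideanSpace ℝ (Fin N) :=
  V.subtype ∘ₗ (V.orthogonalProjection).toLinearMap

/-- `Σ_i cos² θ_i (V,U) = trace (P_V P_U)`, the standard projector formula for the
principal angles `θ_i` between `V` and `U`. -/
noncomputable def cos2sum {N : ℕ} (V U : Submodule ℝ (EuclideanSpace ℝ (Fin N))) : ℝ :=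
  LinearMap.trace ℝ _ (projOf V ∘ₗ projOf U)

/-- Chordal distance: `d_κ(V,U)² = |k-l| + Σ sin²θ_i = max(k,l) - Σ cos²θ_i`. -/
noncomputable def dChordal {N : ℕ} (V U : Submodule ℝ (EuclideanSpace ℝ (Fin N))) : ℝ :=
  Real.sqrt ((max (finrank ℝ V) (finrank ℝ U) : ℝ) - cos2sum V U)
/-- Zero-padding embedding of `ℝ^N` into the first `N` coordinates of `ℝ^M`. -/
def padMapE (N M : ℕ) : EuclideanSpace ℝ (Fin N) →ₗ[ℝ] EuclideanSpace ℝ (Fin M) where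
  toFun x := WithLp.toLp 2 (fun i => if h : (i : ℕ) < N then x ⟨i, h⟩ else 0)
  map_add' x y := by ext i; by_cases h : (i : ℕ) < N <;> simp [h]
  map_smul' c x := by ext i; by_cases h : (i : ℕ) < N <;> simp [h]

/-- The span of the last `l - k` standard basis vectors of `ℝ^M`. -/
noncomputable def tailSpanE (k l M : ℕ) : Submodule ℝ (EuclideanSpace ℝ (Fin M)) :=
  Submodule.span ℝ {v | ∃ i : Fin M, M - (l - k) ≤ (i : ℕ) ∧ v = EuclideanSpace.single i 1}

/-- The canonical inclusion `Gr(k,N) → Gr(l,M)`: embed into the first `N` coordinates and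
adjoin the last `l - k` standard basis directions (the identity block). -/
noncomputable def iotaE (k l N M : ℕ) (V : Submodule ℝ (EuclideanSpace ℝ (Fin N))) :
    Submodule ℝ (EuclideanSpace ℝ (Fin M)) :=
  V.map (padMapE N M) ⊔ tailSpanE k l M

namespace Submodule

variable {𝕜 E : Type*} [RCLike 𝕜] [NormedAddCommGroup E] [InnerProductSpace 𝕜 E]

theorem IsOrtho.starProjection_sup {A B : Submodule 𝕜 E} [A.HasOrthogonalProjection]
    [B.HasOrthogonalProjection] [(A ⊔ B).HasOrthogonalProjection] (h : A ⟂ B) :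
    (A ⊔ B).starProjection = A.starProjection + B.starProjection := by
  ext u
  refine eq_starProjection_of_mem_of_inner_eq_zero
    (add_mem_sup (A.starProjection_apply_mem u) (B.starProjection_apply_mem u)) ?_
  intro w hw
  obtain ⟨a, ha, b, hb, rfl⟩ := mem_sup.mp hw
  have hAb : inner 𝕜 (A.starProjection u) b = 0 := h.inner_eq (A.starProjection_apply_mem u) hb
  have hBa : inner 𝕜 (B.starProjection u) a = 0 :=
    h.symm.inner_eq (B.starProjection_apply_mem u) ha
  have hA := A.starProjection_inner_eq_zero u a ha
  have hB := B.starProjection_inner_eq_zero u b hb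
  simp only [inner_sub_left] at hA hB
  simp only [add_apply, sub_add_eq_sub_sub, inner_add_right, inner_sub_left]
  linear_combination hA + hB - hAb - hBa

theorem IsOrtho.finrank_sup {A B : Submodule 𝕜 E} [FiniteDimensional 𝕜 A]
    [FiniteDimensional 𝕜 B] (h : A ⟂ B) :
    finrank 𝕜 ↥(A ⊔ B) = finrank 𝕜 A + finrank 𝕜 B := by
  have := finrank_sup_add_finrank_inf_eq A B
  rw [h.disjoint.eq_bot, finrank_bot] at this
  omega

variable [FiniteDimensional 𝕜 E]

theorem trace_starProjection (K : Submodule 𝕜 E) :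
    LinearMap.trace 𝕜 E K.starProjection = finrank 𝕜 K := by
  have hsection : K.orthogonalProjectionOnto.toLinearMap ∘ₗ K.subtype = LinearMap.id :=
    LinearMap.ext fun w => by simp
  rw [starProjection, ContinuousLinearMap.toLinearMap_comp, LinearMap.trace_comp_comm']
  exact (congrArg _ hsection).trans (LinearMap.trace_id 𝕜 K)

theorem trace_starProjection_sup_comp {A B T : Submodule 𝕜 E} (hA : A ⟂ T) (hB : B ⟂ T) :
    LinearMap.trace 𝕜 E
        ((A ⊔ T).starProjection.toLinearMap ∘ₗ (B ⊔ T).starProjection.toLinearMap) =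
      LinearMap.trace 𝕜 E (A.starProjection.toLinearMap ∘ₗ B.starProjection.toLinearMap) +
        finrank 𝕜 T := by
  have hAT : A.starProjection.toLinearMap ∘ₗ T.starProjection.toLinearMap = 0 := by
    rw [← ContinuousLinearMap.toLinearMap_comp, hA.starProjection_comp_starProjection]; rfl
  have hTB : T.starProjection.toLinearMap ∘ₗ B.starProjection.toLinearMap = 0 := by
    rw [← ContinuousLinearMap.toLinearMap_comp, hB.symm.starProjection_comp_starProjection]; rfl
  have hTT : T.starProjection.toLinearMap ∘ₗ T.starProjection.toLinearMap = T.starProjection :=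
    congrArg ContinuousLinearMap.toLinearMap T.isIdempotentElem_starProjection.eq
  rw [hA.starProjection_sup, hB.starProjection_sup, ContinuousLinearMap.toLinearMap_add,
    ContinuousLinearMap.toLinearMap_add, LinearMap.add_comp, LinearMap.comp_add, LinearMap.comp_add,
    hAT, hTB, hTT, add_zero, zero_add, map_add, trace_starProjection]

end Submodule

namespace LinearIsometry

variable {𝕜 E F : Type*} [RCLike 𝕜] [NormedAddCommGroup E] [InnerProductSpace 𝕜 E]
  [NormedAddCommGroup F] [InnerProductSpace 𝕜 F]
  (J : E →ₗᵢ[𝕜] F)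

theorem finrank_map (V : Submodule 𝕜 E) : finrank 𝕜 (V.map J.toLinearMap) = finrank 𝕜 V :=
  (Submodule.equivMapOfInjective _ J.injective V).finrank_eq.symm

variable [FiniteDimensional 𝕜 E] [FiniteDimensional 𝕜 F]

theorem starProjection_map (V : Submodule 𝕜 E) :
    (V.map J.toLinearMap).starProjection.toLinearMap =
      J.toLinearMap ∘ₗ V.starProjection.toLinearMap ∘ₗ LinearMap.adjoint J.toLinearMap := by
  ext u
  refine Submodule.eq_starProjection_of_mem_of_inner_eq_zero
    (Submodule.mem_map_of_mem (V.starProjection_apply_mem _)) ?_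
  rintro _ ⟨v, hv, rfl⟩
  have hperp := V.starProjection_inner_eq_zero (LinearMap.adjoint J.toLinearMap u) v hv
  rw [inner_sub_left, LinearMap.adjoint_inner_left] at hperp
  simpa only [LinearMap.comp_apply, ContinuousLinearMap.coe_coe, coe_toLinearMap, inner_sub_left,
    inner_map_map] using hperp

theorem trace_starProjection_map_comp (V U : Submodule 𝕜 E) :
    LinearMap.trace 𝕜 F ((V.map J.toLinearMap).starProjection.toLinearMap ∘ₗ
        (U.map J.toLinearMap).starProjection.toLinearMap) =
      LinearMap.trace 𝕜 E (V.starProjection.toLinearMap ∘ₗ U.starProjection.toLinearMap) := by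
  rw [starProjection_map, starProjection_map]
  simp only [LinearMap.comp_assoc]
  rw [← LinearMap.comp_assoc _ J.toLinearMap, adjoint_comp_self', LinearMap.id_comp,
    LinearMap.trace_comp_comm', LinearMap.comp_assoc, LinearMap.comp_assoc, adjoint_comp_self',
    LinearMap.comp_id]

end LinearIsometry

theorem cos2sum_eq_trace {N : ℕ} (V U : Submodule ℝ (EuclideanSpace ℝ (Fin N))) :
    cos2sum V U =
      LinearMap.trace ℝ _ (V.starProjection.toLinearMap ∘ₗ U.starProjection.toLinearMap) :=
  rfl

theorem inner_padMapE {N M : ℕ} (hNM : N ≤ M) (x y : EuclideanSpace ℝ (Fin N)) :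
    inner ℝ (padMapE N M x) (padMapE N M y) = inner ℝ x y := by
  simp only [PiLp.inner_apply]
  refine (Fintype.sum_of_injective (Fin.castLE hNM) (Fin.castLE_injective hNM) _ _ ?_ ?_).symm
  · intro i hi
    have hiN : ¬ (i : ℕ) < N := fun h => hi ⟨⟨i, h⟩, rfl⟩
    simp [padMapE, hiN]
  · intro j
    simp [padMapE]

noncomputable def padIsometry {N M : ℕ} (hNM : N ≤ M) :
    EuclideanSpace ℝ (Fin N) →ₗᵢ[ℝ] EuclideanSpace ℝ (Fin M) :=
  (padMapE N M).isometryOfInner (inner_padMapE hNM)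

theorem padIsometry_toLinearMap {N M : ℕ} (hNM : N ≤ M) :
    (padIsometry hNM).toLinearMap = padMapE N M :=
  rfl

theorem isOrtho_map_padMapE_tailSpanE {k l N M : ℕ} (hgap : l - k ≤ M - N)
    (V : Submodule ℝ (EuclideanSpace ℝ (Fin N))) :
    V.map (padMapE N M) ⟂ tailSpanE k l M := by
  refine (Submodule.isOrtho_iff_le.mpr (Submodule.span_le.mpr ?_)).symm
  rintro _ ⟨i, hi, rfl⟩ _ ⟨y, -, rfl⟩
  have hiN : ¬ (i : ℕ) < N := by omega
  simp [EuclideanSpace.inner_single_right, padMapE, hiN]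

theorem finrank_tailSpanE {k l M : ℕ} (h : l - k ≤ M) :
    finrank ℝ (tailSpanE k l M) = l - k := by
  let e : Fin (l - k) → Fin M := fun j => ⟨M - (l - k) + j, by omega⟩
  have he : Function.Injective e := fun a b hab => Fin.ext (by simpa [e] using hab)
  have hrange : {v | ∃ i : Fin M, M - (l - k) ≤ (i : ℕ) ∧ v = EuclideanSpace.single i 1} =
      Set.range ((fun i => EuclideanSpace.single i (1 : ℝ)) ∘ e) := by
    ext v
    constructor
    · rintro ⟨i, hi, rfl⟩
      exact ⟨⟨i - (M - (l - k)), by omega⟩, by simp only [Function.comp_apply, e]; congr; omega⟩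
    · rintro ⟨j, rfl⟩
      exact ⟨e j, Nat.le_add_right _ _, rfl⟩
  have hli := (EuclideanSpace.orthonormal_single (𝕜 := ℝ) (ι := Fin M)).comp e he
  rw [tailSpanE, hrange, finrank_span_eq_card hli.linearIndependent, Fintype.card_fin]

theorem finrank_iotaE {k l N M : ℕ} (hNM : N ≤ M) (hgap : l - k ≤ M - N)
    (V : Submodule ℝ (EuclideanSpace ℝ (Fin N))) :
    finrank ℝ (iotaE k l N M V) = finrank ℝ V + (l - k) := by
  rw [iotaE, (isOrtho_map_padMapE_tailSpanE hgap V).finrank_sup, ← padIsometry_toLinearMap hNM,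
    LinearIsometry.finrank_map, finrank_tailSpanE (hgap.trans (Nat.sub_le M N))]

theorem cos2sum_iotaE {k l N M : ℕ} (hNM : N ≤ M) (hgap : l - k ≤ M - N)
    (V U : Submodule ℝ (EuclideanSpace ℝ (Fin N))) :
    cos2sum (iotaE k l N M V) (iotaE k l N M U) = cos2sum V U + (l - k : ℕ) := by
  rw [cos2sum_eq_trace, iotaE, iotaE, Submodule.trace_starProjection_sup_comp
    (isOrtho_map_padMapE_tailSpanE hgap V) (isOrtho_map_padMapE_tailSpanE hgap U),
    ← padIsometry_toLinearMap hNM, LinearIsometry.trace_starProjection_map_comp,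
    finrank_tailSpanE (hgap.trans (Nat.sub_le M N)), cos2sum_eq_trace]

theorem iota_preserves_chordal_general {k l N M : ℕ}
    (hNM : N ≤ M) (hgap : l - k ≤ M - N)
    (V U : Submodule ℝ (EuclideanSpace ℝ (Fin N))) :
    dChordal (iotaE k l N M V) (iotaE k l N M U) = dChordal V U := by
  rw [dChordal, dChordal, finrank_iotaE hNM hgap V, finrank_iotaE hNM hgap U,
    cos2sum_iotaE hNM hgap, Nat.cast_add, Nat.cast_add, max_add_add_right, add_sub_add_right_eq_sub]

/-- The canonical inclusion preserves the chordal distance: the added identity-block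
directions are common to both images and contribute zero principal angles, and the
dimension difference is unchanged. -/
theorem iota_preserves_chordal {k l N M : ℕ}
    (hkl : k ≤ l) (hNM : N ≤ M) (hgap : l - k ≤ M - N)
    (V U : Submodule ℝ (EuclideanSpace ℝ (Fin N)))
    (hV : finrank ℝ V = k) (hU : finrank ℝ U = k) :
    dChordal (iotaE k l N M V) (iotaE k l N M U) = dChordal V U :=
  iota_preserves_chordal_general hNM hgap V U
end

section
/- For the chordal metric d_κ on subspaces of ℝ^N, d_κ(V,U)² = δ_κ(V,U)² + |dim V - dim U|, where δ_κ(V,U)² = Σ_{i=1}^{min(dim V, dim U)} sin²θ_i(V,U). -/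
open Module

/-- Misfit part of the chordal metric: `δ_κ(V,U)² = Σ sin²θ_i = min(k,l) - Σ cos²θ_i`. -/
noncomputable def deltaChordal {N : ℕ} (V U : Submodule ℝ (EuclideanSpace ℝ (Fin N))) : ℝ :=
  Real.sqrt ((min (finrank ℝ V) (finrank ℝ U) : ℝ) - cos2sum V U)

/-!
Over an orthonormal basis `b` of `V`, `trace (P_V P_U) = ∑ ‖P_U bᵢ‖² ≤ dim V`, and symmetrically
`≤ dim U`. Hence both radicands are nonnegative, the square roots square away, and the identity
reduces to `max k l - min k l = |k - l|`.
-/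

section

variable {E : Type*} [NormedAddCommGroup E] [InnerProductSpace ℝ E]

theorem Submodule.inner_starProjection_self (K : Submodule ℝ E) [K.HasOrthogonalProjection]
    (x : E) : inner ℝ x (K.starProjection x) = ‖K.starProjection x‖ ^ 2 := by
  have hidem : K.starProjection (K.starProjection x) = K.starProjection x :=
    K.starProjection_eq_self_iff.mpr (K.starProjection_apply_mem x)
  calc inner ℝ x (K.starProjection x) = inner ℝ x (K.starProjection (K.starProjection x)) := by
        rw [hidem]
    _ = ‖K.starProjection x‖ ^ 2 := by
        rw [← inner_starProjection_left_eq_right, real_inner_self_eq_norm_sq]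

variable [FiniteDimensional ℝ E]

theorem trace_starProjection_comp_eq_sum_norm_sq {ι : Type*} [Fintype ι] (V U : Submodule ℝ E)
    (b : OrthonormalBasis ι ℝ V) :
    LinearMap.trace ℝ E ((V.starProjection : E →ₗ[ℝ] E) ∘ₗ U.starProjection) =
      ∑ i, ‖U.starProjection (b i)‖ ^ 2 := by
  refine (LinearMap.trace_comp_comm'
    ((V.orthogonalProjectionOnto : E →ₗ[ℝ] V) ∘ₗ (U.starProjection : E →ₗ[ℝ] E)) V.subtype).trans ?_
  rw [LinearMap.trace_eq_sum_inner _ b]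
  refine Finset.sum_congr rfl fun i _ => ?_
  rw [LinearMap.comp_apply, LinearMap.comp_apply, ContinuousLinearMap.coe_coe,
    Submodule.inner_orthogonalProjectionOnto_eq_of_mem_left]
  exact U.inner_starProjection_self _

theorem trace_starProjection_comp_le_finrank (V U : Submodule ℝ E) :
    LinearMap.trace ℝ E ((V.starProjection : E →ₗ[ℝ] E) ∘ₗ U.starProjection) ≤ finrank ℝ V := by
  have b := stdOrthonormalBasis ℝ V
  calc LinearMap.trace ℝ E ((V.starProjection : E →ₗ[ℝ] E) ∘ₗ U.starProjection)
      = ∑ i, ‖U.starProjection (b i)‖ ^ 2 := trace_starProjection_comp_eq_sum_norm_sq V U b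
    _ ≤ ∑ i, ‖(b i : E)‖ ^ 2 := by
        gcongr with i
        exact U.norm_starProjection_apply_le _
    _ = finrank ℝ V := by simp [Submodule.norm_coe, b.norm_eq_one]

end

theorem sq_sqrt_max_sub_eq_add_abs {a b c : ℝ} (h : c ≤ min a b) :
    √(max a b - c) ^ 2 = √(min a b - c) ^ 2 + |a - b| := by
  rw [Real.sq_sqrt (by linarith [min_le_max (a := a) (b := b)]), Real.sq_sqrt (by linarith),
    ← max_sub_min_eq_abs']
  ring

theorem cos2sum_comm {N : ℕ} (V U : Submodule ℝ (EuclideanSpace ℝ (Fin N))) :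
    cos2sum V U = cos2sum U V :=
  LinearMap.trace_comp_comm' (projOf U) (projOf V)

theorem cos2sum_le_min {N : ℕ} (V U : Submodule ℝ (EuclideanSpace ℝ (Fin N))) :
    cos2sum V U ≤ min (finrank ℝ V : ℝ) (finrank ℝ U) :=
  le_min (trace_starProjection_comp_le_finrank V U)
    (cos2sum_comm V U ▸ trace_starProjection_comp_le_finrank U V)

/-- Decomposition of the squared chordal distance into the misfit term `δ_κ²` and the
dimension-mismatch term `|dim V - dim U|`. -/
theorem chordal_sq_decomposition {N : ℕ} (V U : Submodule ℝ (EuclideanSpace ℝ (Fin N))) :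
    dChordal V U ^ 2 = deltaChordal V U ^ 2 + |(finrank ℝ V : ℝ) - (finrank ℝ U : ℝ)| :=
  sq_sqrt_max_sub_eq_add_abs (cos2sum_le_min V U)
end
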